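/- arXiv:1908.00842 — 4 statements merged into one kernel-verified Lean document; each statement's English description precedes it below -/
import Mathlib

section
/- Let m' be an odd positive integer, let m = 2m', and let n ≥ 1. Suppose f : G → ZMod m is an (m,n)-generalized bent function such that (f x).val is even for every x ∈ G. Then the function g : G → ZMod m' defined by g x = (((f x).val)/2 : ZMod m') is an (m',n)-generalized bent function. -/
/-- The primitive complex `m`-th root of unity `exp(2πi/m)`. -/
noncomputable def zetaC (m : ℕ) : ℂ := Complex.exp (2 * Real.pi * Complex.I / m)

/-- `f : (Fin n → ZMod 2) → ZMod m` is an `(m,n)`-generalized bent function if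
`|∑_x ζ_m^{f x} (-1)^{y·x}|² = 2^n` for all `y`. -/
noncomputable def IsGBF (m n : ℕ) (f : (Fin n → ZMod 2) → ZMod m) : Prop :=
  ∀ y : Fin n → ZMod 2,
    ‖∑ x : Fin n → ZMod 2,
      zetaC m ^ (f x).val * (-1 : ℂ) ^ (∑ i : Fin n, (y i).val * (x i).val)‖ ^ 2
      = (2 : ℝ) ^ n

/-! Since `ζ_{2m}^2 = ζ_m`, the Walsh–Hadamard sums of `g` and of `f` agree term by term. -/

lemma zetaC_pow_self (m : ℕ) : zetaC m ^ m = 1 := by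
  rcases Nat.eq_zero_or_pos m with rfl | hm
  · exact pow_zero _
  rw [zetaC, ← Complex.exp_nat_mul, mul_div_cancel₀ _ (Nat.cast_ne_zero.mpr hm.ne'),
    Complex.exp_eq_one_iff]
  exact ⟨1, by ring⟩

lemma zetaC_pow_val_natCast (m k : ℕ) : zetaC m ^ (k : ZMod m).val = zetaC m ^ k := by
  rw [ZMod.val_natCast, ← pow_eq_pow_mod _ (zetaC_pow_self m)]

lemma zetaC_two_mul_sq (m : ℕ) : zetaC (2 * m) ^ 2 = zetaC m := by
  rw [zetaC, zetaC, ← Complex.exp_nat_mul]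
  congr 1
  push_cast
  ring

lemma zetaC_pow_val_half {m k : ℕ} (hk : Even k) :
    zetaC m ^ ((k / 2 : ℕ) : ZMod m).val = zetaC (2 * m) ^ k := by
  obtain ⟨j, rfl⟩ := hk
  rw [zetaC_pow_val_natCast, ← zetaC_two_mul_sq, ← pow_mul]
  congr 1
  omega

theorem stmt_1_general (m' n : ℕ)
    (f : (Fin n → ZMod 2) → ZMod (2 * m')) (hf : IsGBF (2 * m') n f)
    (heven : ∀ x, Even (f x).val) :
    IsGBF m' n (fun x => (((f x).val / 2 : ℕ) : ZMod m')) := by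
  intro y
  rw [← hf y]
  congr 2
  refine Finset.sum_congr rfl fun x _ => ?_
  rw [zetaC_pow_val_half (heven x)]

theorem stmt_1 (m' n : ℕ) (hm' : 0 < m') (hodd : Odd m') (hn : 1 ≤ n)
    (f : (Fin n → ZMod 2) → ZMod (2 * m')) (hf : IsGBF (2 * m') n f)
    (heven : ∀ x, Even (f x).val) :
    IsGBF m' n (fun x => (((f x).val / 2 : ℕ) : ZMod m')) :=
  stmt_1_general m' n f hf heven
end

section
/- Let m be a positive integer with 4 ∤ m, let q₁ ≠ q₂ be primes dividing m, and for i = 1,2 let Q_i = {x ∈ ZMod m : q_i • x = 0} (the unique subgroup of order q_i). Suppose h₁, h₂ ∈ ZMod m satisfy the equality of ℕ-valued functions 1_{Q₁+h₁} + 1_{Q₂+h₂} = 1_{Q₁−h₁} + 1_{Q₂−h₂} on ZMod m (where 1_S denotes the indicator function of the coset S). Then for each i = 1,2 there exists h_i' ∈ ZMod m with h_i' + h_i' = 0 and Q_i + h_i' = Q_i + h_i, i.e., the coset Q_i + h_i contains an element of additive order dividing 2; in particular Q_i + h_i = −(Q_i + h_i). -/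
theorem aux_mem (m q : ℕ) (h p : ZMod m) :
    p ∈ (· + h) '' {x : ZMod m | q • x = 0} ↔ q • (p - h) = 0 := by
  constructor
  · rintro ⟨x, hx, rfl⟩
    simpa using hx
  · intro hp
    exact ⟨p - h, hp, by ring⟩

theorem auxC (m qa qb : ℕ) (hm : 0 < m) (ha : qa.Prime) (hb : qb.Prime)
    (hne : qa ≠ qb) (hda : qa ∣ m) (hdb : qb ∣ m) (c : ZMod m)
    (H : ∀ x : ZMod m, qa • x = 0 → qb • (x + c) = 0) : False := by
  haveI : NeZero m := ⟨hm.ne'⟩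
  have h0 : qb • c = 0 := by simpa using H 0 (by simp)
  set z : ZMod m := ((m / qa : ℕ) : ZMod m) with hzdef
  have hz : qa • z = 0 := by
    have h1 : ((qa * (m / qa) : ℕ) : ZMod m) = 0 := by
      rw [Nat.mul_div_cancel' hda]; exact ZMod.natCast_self m
    rw [hzdef, nsmul_eq_mul]
    push_cast at h1 ⊢
    exact h1
  have hz2 : qb • z = 0 := by
    have h2 := H z hz
    rw [smul_add, h0, add_zero] at h2
    exact h2
  have h3 : ((qb * (m / qa) : ℕ) : ZMod m) = 0 := by
    rw [nsmul_eq_mul] at hz2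
    push_cast
    exact hz2
  have hdvd : m ∣ qb * (m / qa) := (ZMod.natCast_eq_zero_iff _ _).mp h3
  obtain ⟨k, hk⟩ := hda
  have hk0 : 0 < k := by
    rcases Nat.eq_zero_or_pos k with h | h
    · subst h; simp at hk; omega
    · exact h
  have hmk : m / qa = k := by rw [hk, Nat.mul_div_cancel_left _ ha.pos]
  rw [hmk, hk] at hdvd
  have : qa ∣ qb := (Nat.mul_dvd_mul_iff_right hk0).mp hdvd
  exact hne ((Nat.prime_dvd_prime_iff_eq ha hb).mp this)

theorem auxB (m : ℕ) (hm : 0 < m) (q : ℕ) (h4 : ¬ (4 ∣ m)) (hq : q.Prime)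
    (h : ZMod m) (hh : q • (h + h) = 0) :
    ∃ h' : ZMod m, h' + h' = 0 ∧ q • (h' - h) = 0 := by
  rcases hq.eq_two_or_odd' with rfl | hodd
  · -- q = 2
    have h4h : (4 : ℕ) • h = 0 := by
      rw [smul_add, ← add_nsmul] at hh
      exact hh
    have hmh : m • h = 0 := by
      rw [nsmul_eq_mul, ZMod.natCast_self, zero_mul]
    have hd4 : addOrderOf h ∣ 4 := addOrderOf_dvd_of_nsmul_eq_zero h4h
    have hdm : addOrderOf h ∣ m := addOrderOf_dvd_of_nsmul_eq_zero hmh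
    have hne4 : addOrderOf h ≠ 4 := by
      intro e
      exact h4 (e ▸ hdm)
    have hd2 : addOrderOf h ∣ 2 := by
      have h1 : 1 ≤ addOrderOf h := Nat.pos_of_dvd_of_pos hd4 (by norm_num)
      have h2 : addOrderOf h ≤ 4 := Nat.le_of_dvd (by norm_num) hd4
      interval_cases h : addOrderOf h <;> simp_all <;> omega
    have h2h : (2 : ℕ) • h = 0 := addOrderOf_dvd_iff_nsmul_eq_zero.mp hd2
    refine ⟨h, ?_, by simp⟩
    rw [two_nsmul] at h2h
    exact h2h
  · -- q odd
    obtain ⟨c, hc⟩ : Even (q + 1) := hodd.add_one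
    refine ⟨-(q • h), ?_, ?_⟩
    · rw [smul_add] at hh
      rw [← neg_add, hh, neg_zero]
    · have hh' : (q : ZMod m) * (h + h) = 0 := by rw [← nsmul_eq_mul]; exact hh
      have hc' : ((q : ZMod m) + 1) = (c : ZMod m) + (c : ZMod m) := by
        have : ((q + 1 : ℕ) : ZMod m) = ((c + c : ℕ) : ZMod m) := by rw [hc]
        push_cast at this
        exact this
      simp only [nsmul_eq_mul]
      linear_combination (-(c : ZMod m)) * hh' + (-(q : ZMod m) * h) * hc'

theorem auxD (m q : ℕ) (h h' : ZMod m) (hd : q • (h' - h) = 0) :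
    (· + h') '' {x : ZMod m | q • x = 0} = (· + h) '' {x : ZMod m | q • x = 0} := by
  have hd' : (q : ZMod m) * (h' - h) = 0 := by rw [← nsmul_eq_mul]; exact hd
  ext p
  rw [aux_mem, aux_mem]
  simp only [nsmul_eq_mul]
  constructor
  · intro hp
    linear_combination hp + hd'
  · intro hp
    linear_combination hp - hd'

theorem stmt_5 (m : ℕ) (hm : 0 < m) (h4 : ¬ (4 ∣ m))
    (q₁ q₂ : ℕ) (hq₁ : q₁.Prime) (hq₂ : q₂.Prime) (hne : q₁ ≠ q₂)
    (hd₁ : q₁ ∣ m) (hd₂ : q₂ ∣ m)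
    (Q₁ Q₂ : Set (ZMod m))
    (hQ₁ : Q₁ = {x : ZMod m | q₁ • x = 0})
    (hQ₂ : Q₂ = {x : ZMod m | q₂ • x = 0})
    (h₁ h₂ : ZMod m)
    (heq : Set.indicator ((· + h₁) '' Q₁) (fun _ => (1 : ℕ)) +
             Set.indicator ((· + h₂) '' Q₂) (fun _ => (1 : ℕ)) =
           Set.indicator ((· + (-h₁)) '' Q₁) (fun _ => (1 : ℕ)) +
             Set.indicator ((· + (-h₂)) '' Q₂) (fun _ => (1 : ℕ))) :
    (∃ h₁' : ZMod m, h₁' + h₁' = 0 ∧ (· + h₁') '' Q₁ = (· + h₁) '' Q₁) ∧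
    (∃ h₂' : ZMod m, h₂' + h₂' = 0 ∧ (· + h₂') '' Q₂ = (· + h₂) '' Q₂) := by
  subst hQ₁ hQ₂
  have key₁ : q₁ • (h₁ + h₁) = 0 := by
    by_contra hcon
    apply auxC m q₁ q₂ hm hq₁ hq₂ hne hd₁ hd₂ (h₁ + h₂)
    intro x hx
    have hfx := congrFun heq (x + h₁)
    simp only [Pi.add_apply] at hfx
    have m1 : (x + h₁) ∈ (· + h₁) '' {x : ZMod m | q₁ • x = 0} := ⟨x, hx, rfl⟩
    have m2 : (x + h₁) ∉ (· + (-h₁)) '' {x : ZMod m | q₁ • x = 0} := by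
      rw [aux_mem]
      intro hmem
      apply hcon
      have he : x + h₁ - -h₁ = x + (h₁ + h₁) := by ring
      rw [he, smul_add, hx, zero_add] at hmem
      exact hmem
    have m3 : (x + h₁) ∈ (· + (-h₂)) '' {x : ZMod m | q₂ • x = 0} := by
      by_contra m3
      rw [Set.indicator_of_mem m1, Set.indicator_of_notMem m2,
        Set.indicator_of_notMem m3] at hfx
      omega
    rw [aux_mem] at m3
    have he : x + h₁ - -h₂ = x + (h₁ + h₂) := by ring
    rw [he] at m3
    exact m3
  have key₂ : q₂ • (h₂ + h₂) = 0 := by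
    by_contra hcon
    apply auxC m q₂ q₁ hm hq₂ hq₁ hne.symm hd₂ hd₁ (h₂ + h₁)
    intro x hx
    have hfx := congrFun heq (x + h₂)
    simp only [Pi.add_apply] at hfx
    have m1 : (x + h₂) ∈ (· + h₂) '' {x : ZMod m | q₂ • x = 0} := ⟨x, hx, rfl⟩
    have m2 : (x + h₂) ∉ (· + (-h₂)) '' {x : ZMod m | q₂ • x = 0} := by
      rw [aux_mem]
      intro hmem
      apply hcon
      have he : x + h₂ - -h₂ = x + (h₂ + h₂) := by ring
      rw [he, smul_add, hx, zero_add] at hmem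
      exact hmem
    have m3 : (x + h₂) ∈ (· + (-h₁)) '' {x : ZMod m | q₁ • x = 0} := by
      by_contra m3
      rw [Set.indicator_of_mem m1, Set.indicator_of_notMem m2,
        Set.indicator_of_notMem m3] at hfx
      omega
    rw [aux_mem] at m3
    have he : x + h₂ - -h₁ = x + (h₂ + h₁) := by ring
    rw [he] at m3
    exact m3
  obtain ⟨h₁', hs₁, hdf₁⟩ := auxB m hm q₁ h4 hq₁ h₁ key₁
  obtain ⟨h₂', hs₂, hdf₂⟩ := auxB m hm q₂ h4 hq₂ h₂ key₂
  exact ⟨⟨h₁', hs₁, auxD m q₁ h₁ h₁' hdf₁⟩, ⟨h₂', hs₂, auxD m q₂ h₂ h₂' hdf₂⟩⟩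
end

section
/- Let m be a positive integer with 4 ∤ m, let q₁, q₂, q₃ be pairwise distinct primes dividing m, and for i = 1,2,3 let Q_i = {x ∈ ZMod m : q_i • x = 0}. Suppose h₁, h₂, h₃ ∈ ZMod m satisfy the equality of ℕ-valued functions ∑_{i=1}^{3} 1_{Q_i+h_i} = ∑_{i=1}^{3} 1_{Q_i−h_i} on ZMod m. Then for each i = 1,2,3 there exists h_i' ∈ ZMod m with h_i' + h_i' = 0 and Q_i + h_i = Q_i + h_i'. -/
def coset (m q : ℕ) (h : ZMod m) : Set (ZMod m) := {x | q • (x - h) = 0}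

lemma mem_coset {m q : ℕ} {h x : ZMod m} : x ∈ coset m q h ↔ q • (x - h) = 0 := Iff.rfl

lemma self_mem_coset {m q : ℕ} (h : ZMod m) : h ∈ coset m q h := by
  simp [coset]

lemma coset_eq_of_mem {m q : ℕ} {h h' x : ZMod m} (hx : x ∈ coset m q h)
    (hx' : x ∈ coset m q h') : coset m q h = coset m q h' := by
  rw [mem_coset] at hx hx'
  have hd : q • (h - h') = 0 := by
    have e : h - h' = (x - h') - (x - h) := by ring
    rw [e, smul_sub, hx, hx', sub_zero]
  ext y
  simp only [mem_coset]
  constructor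
  · intro hy
    have e : y - h' = (y - h) + (h - h') := by ring
    rw [e, smul_add, hy, hd, add_zero]
  · intro hy
    have e : y - h = (y - h') - (h - h') := by ring
    rw [e, smul_sub, hy, hd, sub_zero]

lemma image_eq {m q : ℕ} {Q : Set (ZMod m)} (hQ : Q = {x : ZMod m | q • x = 0})
    (h : ZMod m) : (· + h) '' Q = coset m q h := by
  subst hQ
  ext x
  simp only [Set.mem_image, Set.mem_setOf_eq, mem_coset]
  constructor
  · rintro ⟨y, hy, rfl⟩
    simpa using hy
  · intro hx
    exact ⟨x - h, hx, by ring⟩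

lemma zero_of_two {m p s : ℕ} (hp : p.Prime) (hs : s.Prime) (hps : p ≠ s)
    {z : ZMod m} (h1 : p • z = 0) (h2 : s • z = 0) : z = 0 := by
  have hc : Nat.Coprime p s := (Nat.coprime_primes hp hs).mpr hps
  have hb := Nat.gcd_eq_gcd_ab p s
  rw [hc] at hb
  have h1' : (p : ℤ) • z = 0 := by rw [natCast_zsmul]; exact h1
  have h2' : (s : ℤ) • z = 0 := by rw [natCast_zsmul]; exact h2
  calc z = (1 : ℤ) • z := (one_smul _ _).symm
    _ = ((p : ℤ) * Nat.gcdA p s + (s : ℤ) * Nat.gcdB p s) • z := by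
        rw [← hb]; norm_num
    _ = Nat.gcdA p s • ((p : ℤ) • z) + Nat.gcdB p s • ((s : ℤ) • z) := by
        rw [add_smul, mul_comm (p : ℤ), mul_comm (s : ℤ), mul_smul, mul_smul]
    _ = 0 := by rw [h1', h2', smul_zero, smul_zero, add_zero]

lemma key {m : ℕ} (hm : 0 < m) {q p r : ℕ} (hq : q.Prime) (hp : p.Prime) (hr : r.Prime)
    (hqp : q ≠ p) (hqr : q ≠ r) (hq2 : q ≠ 2) (hqm : q ∣ m)
    (h a b : ZMod m)
    (hcov : ∀ x ∈ coset m q h, x ∈ coset m q (-h) ∨ x ∈ coset m p a ∨ x ∈ coset m r b) :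
    coset m q h = coset m q (-h) := by
  by_contra hne
  haveI : NeZero m := ⟨hm.ne'⟩
  have hdisj : ∀ x, x ∈ coset m q h → x ∉ coset m q (-h) :=
    fun x hx hx' => hne (coset_eq_of_mem hx hx')
  have hq3 : 3 ≤ q := by
    have := hq.two_le; omega
  set g : ZMod m := ((m / q : ℕ) : ZMod m) with hg
  have hk0 : 0 < m / q := Nat.div_pos (Nat.le_of_dvd hm hqm) hq.pos
  have hkm : m / q < m := Nat.div_lt_self hm hq.one_lt
  have h3m : 3 * (m / q) ≤ m := by
    calc 3 * (m / q) ≤ q * (m / q) := Nat.mul_le_mul_right _ hq3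
      _ = m := Nat.mul_div_cancel' hqm
  have hqg : q • g = 0 := by
    have e : q • g = ((q * (m / q) : ℕ) : ZMod m) := by
      rw [hg, nsmul_eq_mul, Nat.cast_mul]
    rw [e, Nat.mul_div_cancel' hqm, ZMod.natCast_self]
  have hgne : g ≠ 0 := by
    rw [hg, Ne, ZMod.natCast_eq_zero_iff]
    intro hdvd
    have := Nat.le_of_dvd hk0 hdvd
    omega
  have hggne : g + g ≠ 0 := by
    rw [hg, ← Nat.cast_add, Ne, ZMod.natCast_eq_zero_iff]
    intro hdvd
    have := Nat.le_of_dvd (by omega) hdvd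
    omega
  have m0 : h ∈ coset m q h := self_mem_coset h
  have m1 : g + h ∈ coset m q h := by
    rw [mem_coset]; simpa using hqg
  have m2 : g + g + h ∈ coset m q h := by
    rw [mem_coset]
    have e : g + g + h - h = g + g := by ring
    rw [e, smul_add, hqg, add_zero]
  have c0 := (hcov _ m0).resolve_left (hdisj _ m0)
  have c1 := (hcov _ m1).resolve_left (hdisj _ m1)
  have c2 := (hcov _ m2).resolve_left (hdisj _ m2)
  have pair : ∀ (s : ℕ), s.Prime → q ≠ s → ∀ (t u v : ZMod m),
      u ∈ coset m s t → v ∈ coset m s t → q • (u - v) = 0 → u = v := by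
    intro s hs hqs t u v hu hv hq'
    rw [mem_coset] at hu hv
    have hsv : s • (u - v) = 0 := by
      have e : u - v = (u - t) - (v - t) := by ring
      rw [e, smul_sub, hu, hv, sub_zero]
    exact sub_eq_zero.mp (zero_of_two hq hs hqs hq' hsv)
  have d10 : q • ((g + h) - h) = 0 := by simpa using hqg
  have d21 : q • ((g + g + h) - (g + h)) = 0 := by
    have e : (g + g + h) - (g + h) = g := by ring
    rw [e]; exact hqg
  have d20 : q • ((g + g + h) - h) = 0 := by
    have e : (g + g + h) - h = g + g := by ring
    rw [e, smul_add, hqg, add_zero]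
  have n10 : (g + h) ≠ h := by
    intro e; apply hgne; have : g + h - h = 0 := by rw [e]; ring
    simpa using this
  have n21 : (g + g + h) ≠ (g + h) := by
    intro e; apply hgne
    have : (g + g + h) - (g + h) = 0 := by rw [e]; ring
    have e2 : (g + g + h) - (g + h) = g := by ring
    rw [e2] at this; exact this
  have n20 : (g + g + h) ≠ h := by
    intro e; apply hggne
    have : (g + g + h) - h = 0 := by rw [e]; ring
    have e2 : (g + g + h) - h = g + g := by ring
    rw [e2] at this; exact this
  rcases c0 with c0 | c0 <;> rcases c1 with c1 | c1 <;> rcases c2 with c2 | c2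
  · exact n10 (pair p hp hqp a _ _ c1 c0 d10)
  · exact n10 (pair p hp hqp a _ _ c1 c0 d10)
  · exact n20 (pair p hp hqp a _ _ c2 c0 d20)
  · exact n21 (pair r hr hqr b _ _ c2 c1 d21)
  · exact n21 (pair p hp hqp a _ _ c2 c1 d21)
  · exact n20 (pair r hr hqr b _ _ c2 c0 d20)
  · exact n10 (pair r hr hqr b _ _ c1 c0 d10)
  · exact n10 (pair r hr hqr b _ _ c1 c0 d10)

lemma final {m q : ℕ} (hm : 0 < m) (h4 : ¬ (4 ∣ m)) (hq : q.Prime) (h : ZMod m)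
    (hsym : coset m q h = coset m q (-h)) :
    ∃ h' : ZMod m, h' + h' = 0 ∧ coset m q h = coset m q h' := by
  have hh : q • (h + h) = 0 := by
    have hmem : h ∈ coset m q (-h) := hsym ▸ self_mem_coset h
    rw [mem_coset, sub_neg_eq_add] at hmem
    exact hmem
  rcases eq_or_ne q 2 with h2 | h2
  · subst h2
    have h4h : (4 : ℕ) • h = 0 := by
      have e : (2 : ℕ) • (h + h) = (4 : ℕ) • h := by
        rw [smul_add, ← add_nsmul]
      rw [← e, hh]
    have hdvd : addOrderOf h ∣ 4 := addOrderOf_dvd_of_nsmul_eq_zero h4h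
    have hm' : m • h = 0 := by rw [nsmul_eq_mul, ZMod.natCast_self, zero_mul]
    have hdm : addOrderOf h ∣ m := addOrderOf_dvd_of_nsmul_eq_zero hm'
    have hgd : addOrderOf h ∣ Nat.gcd 4 m := Nat.dvd_gcd hdvd hdm
    have hg2 : Nat.gcd 4 m ∣ 2 := by
      have ha : Nat.gcd 4 m ∣ 4 := Nat.gcd_dvd_left _ _
      have hb : Nat.gcd 4 m ≠ 4 := fun he => h4 (he ▸ Nat.gcd_dvd_right 4 m)
      have hle : Nat.gcd 4 m ≤ 4 := Nat.le_of_dvd (by norm_num) ha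
      interval_cases hc : Nat.gcd 4 m <;> omega
    have h2h : (2 : ℕ) • h = 0 :=
      addOrderOf_dvd_iff_nsmul_eq_zero.mp (hgd.trans hg2)
    exact ⟨h, by simpa [two_smul] using h2h, rfl⟩
  · obtain ⟨k, hk⟩ := hq.odd_of_ne_two h2
    set t := h + h with ht
    set s : ZMod m := (k + 1) • t with hs
    have hqs : q • s = 0 := by
      rw [hs, smul_smul, mul_comm, mul_smul, hh, smul_zero]
    have hss : s + s = t := by
      have e1 : s + s = ((k + 1) + (k + 1)) • t := by rw [add_smul]
      have e2 : (k + 1) + (k + 1) = q + 1 := by omega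
      rw [e1, e2, add_smul, hh, one_smul, zero_add]
    refine ⟨h - s, ?_, ?_⟩
    · have e : (h - s) + (h - s) = (h + h) - (s + s) := by ring
      rw [e, hss, ht, sub_self]
    · refine coset_eq_of_mem (x := h - s) ?_ ?_
      · rw [mem_coset]
        have e : (h - s) - h = -s := by ring
        rw [e, smul_neg, hqs, neg_zero]
      · exact self_mem_coset _

lemma indicator_cancel {α : Type*} (S T : Set α)
    (hST : ∀ x, Set.indicator S (fun _ => (1:ℕ)) x = Set.indicator T (fun _ => (1:ℕ)) x) :
    S = T := by
  ext x
  have H := hST x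
  by_cases h1 : x ∈ S <;> by_cases h2 : x ∈ T <;>
    simp [h1, h2] at H ⊢

theorem stmt_7 (m : ℕ) (hm : 0 < m) (h4 : ¬ (4 ∣ m))
    (q₁ q₂ q₃ : ℕ) (hq₁ : q₁.Prime) (hq₂ : q₂.Prime) (hq₃ : q₃.Prime)
    (h12 : q₁ ≠ q₂) (h13 : q₁ ≠ q₃) (h23 : q₂ ≠ q₃)
    (hd₁ : q₁ ∣ m) (hd₂ : q₂ ∣ m) (hd₃ : q₃ ∣ m)
    (Q₁ Q₂ Q₃ : Set (ZMod m))
    (hQ₁ : Q₁ = {x : ZMod m | q₁ • x = 0})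
    (hQ₂ : Q₂ = {x : ZMod m | q₂ • x = 0})
    (hQ₃ : Q₃ = {x : ZMod m | q₃ • x = 0})
    (h₁ h₂ h₃ : ZMod m)
    (heq : Set.indicator ((· + h₁) '' Q₁) (fun _ => (1 : ℕ)) +
             Set.indicator ((· + h₂) '' Q₂) (fun _ => (1 : ℕ)) +
             Set.indicator ((· + h₃) '' Q₃) (fun _ => (1 : ℕ)) =
           Set.indicator ((· + (-h₁)) '' Q₁) (fun _ => (1 : ℕ)) +
             Set.indicator ((· + (-h₂)) '' Q₂) (fun _ => (1 : ℕ)) +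
             Set.indicator ((· + (-h₃)) '' Q₃) (fun _ => (1 : ℕ))) :
    (∃ h₁' : ZMod m, h₁' + h₁' = 0 ∧ (· + h₁) '' Q₁ = (· + h₁') '' Q₁) ∧
    (∃ h₂' : ZMod m, h₂' + h₂' = 0 ∧ (· + h₂) '' Q₂ = (· + h₂') '' Q₂) ∧
    (∃ h₃' : ZMod m, h₃' + h₃' = 0 ∧ (· + h₃) '' Q₃ = (· + h₃') '' Q₃) := by
  rw [image_eq hQ₁ h₁, image_eq hQ₂ h₂, image_eq hQ₃ h₃,
      image_eq hQ₁ (-h₁), image_eq hQ₂ (-h₂), image_eq hQ₃ (-h₃)] at heq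
  set C1 := coset m q₁ h₁
  set C2 := coset m q₂ h₂
  set C3 := coset m q₃ h₃
  set D1 := coset m q₁ (-h₁)
  set D2 := coset m q₂ (-h₂)
  set D3 := coset m q₃ (-h₃)
  have canc : ∀ x, Set.indicator C1 (fun _ => (1:ℕ)) x + Set.indicator C2 (fun _ => (1:ℕ)) x
      + Set.indicator C3 (fun _ => (1:ℕ)) x
      = Set.indicator D1 (fun _ => (1:ℕ)) x + Set.indicator D2 (fun _ => (1:ℕ)) x
      + Set.indicator D3 (fun _ => (1:ℕ)) x := by
    intro x
    have H := congrFun heq x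
    simpa using H
  have cov : ∀ x, (x ∈ C1 ∨ x ∈ C2 ∨ x ∈ C3) → (x ∈ D1 ∨ x ∈ D2 ∨ x ∈ D3) := by
    intro x hx
    by_contra hc
    push_neg at hc
    have H := canc x
    rw [Set.indicator_of_notMem hc.1, Set.indicator_of_notMem hc.2.1,
        Set.indicator_of_notMem hc.2.2] at H
    rcases hx with hx | hx | hx
    · rw [Set.indicator_of_mem hx] at H; omega
    · rw [Set.indicator_of_mem hx] at H; omega
    · rw [Set.indicator_of_mem hx] at H; omega
  have main1 : q₁ ≠ 2 → C1 = D1 := by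
    intro hne
    exact key hm hq₁ hq₂ hq₃ h12 h13 hne hd₁ h₁ (-h₂) (-h₃)
      (fun x hx => cov x (Or.inl hx))
  have main2 : q₂ ≠ 2 → C2 = D2 := by
    intro hne
    have := key hm hq₂ hq₁ hq₃ (Ne.symm h12) h23 hne hd₂ h₂ (-h₁) (-h₃)
      (fun x hx => by have := cov x (Or.inr (Or.inl hx)); tauto)
    exact this
  have main3 : q₃ ≠ 2 → C3 = D3 := by
    intro hne
    have := key hm hq₃ hq₁ hq₂ (Ne.symm h13) (Ne.symm h23) hne hd₃ h₃ (-h₁) (-h₂)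
      (fun x hx => by have := cov x (Or.inr (Or.inr hx)); tauto)
    exact this
  have eqs : C1 = D1 ∧ C2 = D2 ∧ C3 = D3 := by
    by_cases e1 : q₁ = 2
    · have E2 := main2 (fun h => h12 (e1.trans h.symm))
      have E3 := main3 (fun h => h13 (e1.trans h.symm))
      refine ⟨?_, E2, E3⟩
      apply indicator_cancel
      intro x
      have H := canc x
      rw [E2, E3] at H
      omega
    · by_cases e2 : q₂ = 2
      · have E1 := main1 e1
        have E3 := main3 (fun h => h23 (e2.trans h.symm))
        refine ⟨E1, ?_, E3⟩
        apply indicator_cancel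
        intro x
        have H := canc x
        rw [E1, E3] at H
        omega
      · by_cases e3 : q₃ = 2
        · have E1 := main1 e1
          have E2 := main2 e2
          refine ⟨E1, E2, ?_⟩
          apply indicator_cancel
          intro x
          have H := canc x
          rw [E1, E2] at H
          omega
        · exact ⟨main1 e1, main2 e2, main3 e3⟩
  obtain ⟨E1, E2, E3⟩ := eqs
  obtain ⟨h₁', hs1, hc1⟩ := final hm h4 hq₁ h₁ E1
  obtain ⟨h₂', hs2, hc2⟩ := final hm h4 hq₂ h₂ E2
  obtain ⟨h₃', hs3, hc3⟩ := final hm h4 hq₃ h₃ E3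
  exact ⟨⟨h₁', hs1, by rw [image_eq hQ₁ h₁, image_eq hQ₁ h₁']; exact hc1⟩,
         ⟨h₂', hs2, by rw [image_eq hQ₂ h₂, image_eq hQ₂ h₂']; exact hc2⟩,
         ⟨h₃', hs3, by rw [image_eq hQ₃ h₃, image_eq hQ₃ h₃']; exact hc3⟩⟩
end

section
/- Let p be an odd prime, α ≥ 1, and n ≥ 1. Then there is no (p^α, n)-generalized bent function. -/
/-!
Write `W(y) = ∑_x ζ^{f x} (-1)^{y·x}` with `ζ = ζ_{p^α}`. Summing `(-1)^{y·d} |W(y)|²` over `y`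
computes the autocorrelation: it equals `2^n ∑_x ζ^{f x - f (x + d)}`. For a bent function
`|W(y)|² = 2^n` is constant, so for `d ≠ 0` the character sum kills it and
`∑_x ζ^{f x - f (x + d)} = 0`: a vanishing sum of `2^n` roots of unity of order `p^α`. The
cyclotomic polynomial `Φ_{p^α}`, the minimal polynomial of `ζ`, then divides `∑_x X^{…}`, and
evaluating at `1` gives `p ∣ Φ_{p^α}(1) ∣ 2^n`, impossible for odd `p`.
-/

open Polynomial ComplexConjugate

theorem Nat.Prime.dvd_eval_one_cyclotomic_pow {p : ℕ} (hp : p.Prime) (α : ℕ) :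
    (p : ℤ) ∣ (cyclotomic (p ^ α) ℤ).eval 1 := by
  have := Fact.mk hp
  cases α with
  | zero => simp
  | succ k => rw [eval_one_cyclotomic_prime_pow]

theorem IsPrimitiveRoot.prime_dvd_card_of_sum_pow_eq_zero {K : Type*} [Field K] [CharZero K]
    {p α : ℕ} (hp : p.Prime) {ζ : K} (hζ : IsPrimitiveRoot ζ (p ^ α))
    {ι : Type*} [Fintype ι] (e : ι → ℕ) (h : ∑ i, ζ ^ e i = 0) :
    p ∣ Fintype.card ι := by
  have hpos : 0 < p ^ α := pow_pos hp.pos α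
  have hdvd : cyclotomic (p ^ α) ℤ ∣ ∑ i, X ^ e i := by
    rw [cyclotomic_eq_minpoly hζ hpos]
    exact minpoly.isIntegrallyClosed_dvd (hζ.isIntegral hpos) (by simpa using h)
  have := (hp.dvd_eval_one_cyclotomic_pow α).trans (eval_dvd hdvd (x := 1))
  simpa [eval_finsetSum, Int.natCast_dvd_natCast] using this

section Walsh
variable {ι : Type*} [Fintype ι]

noncomputable def walsh (y x : ι → ZMod 2) : ℂ := (-1) ^ ∑ i, (y i).val * (x i).val

theorem walsh_eq_zmodChar_dotProduct (y x : ι → ZMod 2) :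
    walsh y x = AddChar.zmodChar 2 (neg_one_sq : (-1 : ℂ) ^ 2 = 1) (y ⬝ᵥ x) := by
  rw [walsh, ← AddChar.zmodChar_apply' (n := 2) neg_one_sq]
  congr 1
  push_cast [dotProduct, ZMod.natCast_val, ZMod.cast_id]
  rfl

theorem walsh_add_right (y x x' : ι → ZMod 2) : walsh y (x + x') = walsh y x * walsh y x' := by
  simp only [walsh_eq_zmodChar_dotProduct, dotProduct_add, AddChar.map_add_eq_mul]

theorem conj_walsh (y x : ι → ZMod 2) : conj (walsh y x) = walsh y x := by
  simp [walsh]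

theorem sum_neg_one_pow_val_mul (c : ZMod 2) :
    ∑ t : ZMod 2, (-1 : ℂ) ^ (t.val * c.val) = if c = 0 then 2 else 0 := by
  rw [show ∀ g : ZMod 2 → ℂ, ∑ t, g t = g 0 + g 1 from fun g => Fin.sum_univ_two g]
  obtain rfl | rfl : c = 0 ∨ c = 1 := by revert c; decide
  · norm_num
  · norm_num [ZMod.val_one]

theorem sum_walsh [DecidableEq ι] (z : ι → ZMod 2) :
    ∑ y, walsh y z = if z = 0 then 2 ^ Fintype.card ι else 0 := by
  simp only [walsh, ← Finset.prod_pow_eq_pow_sum]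
  rw [← Fintype.prod_sum (κ := fun _ => ZMod 2) fun i t => (-1 : ℂ) ^ (t.val * (z i).val)]
  simp only [sum_neg_one_pow_val_mul]
  split_ifs with hz
  · simp [hz]
  · obtain ⟨i, hi⟩ := Function.ne_iff.mp hz
    exact Finset.prod_eq_zero (Finset.mem_univ i) (if_neg hi)

noncomputable def walshTransform [DecidableEq ι] (u : (ι → ZMod 2) → ℂ) (y : ι → ZMod 2) : ℂ :=
  ∑ x, u x * walsh y x

theorem sum_walsh_mul_walshTransform_mul_conj [DecidableEq ι] (u : (ι → ZMod 2) → ℂ)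
    (d : ι → ZMod 2) :
    ∑ y, walsh y d * (walshTransform u y * conj (walshTransform u y)) =
      2 ^ Fintype.card ι * ∑ x, u x * conj (u (x + d)) := by
  have hexpand : ∀ y, walsh y d * (walshTransform u y * conj (walshTransform u y)) =
      ∑ x, ∑ x', u x * conj (u x') * walsh y (x + x' + d) := by
    intro y
    rw [walshTransform, map_sum, Finset.sum_mul_sum, Finset.mul_sum]
    refine Finset.sum_congr rfl fun x _ => ?_
    rw [Finset.mul_sum]
    refine Finset.sum_congr rfl fun x' _ => ?_
    rw [map_mul, conj_walsh, walsh_add_right, walsh_add_right]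
    ring
  have hcancel : ∀ x x' : ι → ZMod 2, x + x' + d = 0 ↔ x' = x + d := fun x x' => by
    rw [add_right_comm, add_eq_zero_iff_eq_neg, ZModModule.neg_eq_self, eq_comm]
  calc ∑ y, walsh y d * (walshTransform u y * conj (walshTransform u y))
      = ∑ x, ∑ x', u x * conj (u x') * ∑ y, walsh y (x + x' + d) := by
        simp only [hexpand, Finset.mul_sum]
        rw [Finset.sum_comm]
        exact Finset.sum_congr rfl fun x _ => Finset.sum_comm
    _ = 2 ^ Fintype.card ι * ∑ x, u x * conj (u (x + d)) := by
        simp only [sum_walsh, hcancel, mul_ite, mul_zero, Finset.sum_ite_eq', Finset.mem_univ,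
          if_true, Finset.mul_sum]
        exact Finset.sum_congr rfl fun x _ => mul_comm _ _

end Walsh

theorem isPrimitiveRoot_zetaC (m : ℕ) [NeZero m] : IsPrimitiveRoot (zetaC m) m :=
  Complex.isPrimitiveRoot_exp m (NeZero.ne m)

theorem pow_val_mul_conj_pow_val {m : ℕ} [NeZero m] {ζ : ℂ} (hζ : ζ ^ m = 1) (a b : ZMod m) :
    ζ ^ a.val * conj (ζ ^ b.val) = ζ ^ (a - b).val := by
  have hnorm : ‖ζ ^ b.val‖ = 1 := by
    rw [norm_pow, Complex.norm_eq_one_of_pow_eq_one hζ (NeZero.ne m), one_pow]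
  have hsplit : ζ ^ a.val = ζ ^ (a - b).val * ζ ^ b.val := by
    simpa [AddChar.zmodChar_apply] using (AddChar.zmodChar m hζ).map_add_eq_mul (a - b) b
  rw [hsplit, mul_assoc, Complex.mul_conj', hnorm]
  simp

theorem IsGBF.sum_pow_val_sub_eq_zero {m n : ℕ} [NeZero m] {f : (Fin n → ZMod 2) → ZMod m}
    (hf : IsGBF m n f) {d : Fin n → ZMod 2} (hd : d ≠ 0) :
    ∑ x, zetaC m ^ (f x - f (x + d)).val = 0 := by
  set u : (Fin n → ZMod 2) → ℂ := fun x => zetaC m ^ (f x).val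
  have hflat : ∀ y, walshTransform u y * conj (walshTransform u y) = 2 ^ n := fun y => by
    rw [Complex.mul_conj']
    exact_mod_cast (show ‖walshTransform u y‖ ^ 2 = (2 : ℝ) ^ n from hf y)
  have h := sum_walsh_mul_walshTransform_mul_conj u d
  simp only [hflat, ← Finset.sum_mul, sum_walsh, if_neg hd, zero_mul, Fintype.card_fin,
    pow_val_mul_conj_pow_val (isPrimitiveRoot_zetaC m).pow_eq_one, u] at h
  exact (mul_eq_zero.mp h.symm).resolve_left (pow_ne_zero n two_ne_zero)

theorem stmt_9_general (p α n : ℕ) (hp : p.Prime) (hodd : Odd p) (hn : 1 ≤ n) :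
    ¬ ∃ f : (Fin n → ZMod 2) → ZMod (p ^ α), IsGBF (p ^ α) n f := by
  rintro ⟨f, hf⟩
  have : NeZero (p ^ α) := ⟨pow_ne_zero α hp.ne_zero⟩
  have hd : (fun _ => 1 : Fin n → ZMod 2) ≠ 0 := fun h => one_ne_zero (congrFun h ⟨0, hn⟩)
  have hdvd : p ∣ 2 ^ n := by
    simpa using (isPrimitiveRoot_zetaC (p ^ α)).prime_dvd_card_of_sum_pow_eq_zero hp _
      (hf.sum_pow_val_sub_eq_zero hd)
  have hp2 : p = 2 := (Nat.prime_dvd_prime_iff_eq hp Nat.prime_two).mp (hp.dvd_of_dvd_pow hdvd)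
  exact Nat.not_odd_iff_even.mpr (hp2 ▸ even_two) hodd

theorem stmt_9 (p α n : ℕ) (hp : p.Prime) (hodd : Odd p) (hα : 1 ≤ α) (hn : 1 ≤ n) :
    ¬ ∃ f : (Fin n → ZMod 2) → ZMod (p ^ α), IsGBF (p ^ α) n f :=
  stmt_9_general p α n hp hodd hn
end
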